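/- Let B₁, B₂ be Banach spaces, K : B₁ → B₂ a C¹ map such that DK_u is surjective with closed kernel and closed complementary subspace for all u ∈ K⁻¹(0), and let f : B₁ → ℝ be C¹. Fix u ∈ K⁻¹(0). Then Df_u(v) = 0 for all v ∈ ker DK_u if and only if there exists λ ∈ B₂* with Df_u(v) = ⟨λ, DK_u(v)⟩ for all v ∈ B₁. -/

import Mathlib

namespace ContinuousLinearMap

variable {𝕜 E F G : Type*} [NontriviallyNormedField 𝕜]
  [NormedAddCommGroup E] [NormedSpace 𝕜 E] [CompleteSpace E]
  [NormedAddCommGroup F] [NormedSpace 𝕜 F] [CompleteSpace F]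
  [AddCommGroup G] [Module 𝕜 G] [TopologicalSpace G]

/-- By the open mapping theorem a surjection between Banach spaces is a quotient map, so the
algebraic factorization of `φ` through `L` is automatically continuous. -/
theorem exists_comp_eq_iff_ker_le {L : E →L[𝕜] F} (hL : Function.Surjective L) (φ : E →L[𝕜] G) :
    (∃ ψ : F →L[𝕜] G, ψ.comp L = φ) ↔ L.ker ≤ φ.ker := by
  constructor
  · rintro ⟨ψ, rfl⟩
    exact LinearMap.ker_le_ker_comp (L : E →ₗ[𝕜] F) (ψ : F →ₗ[𝕜] G)
  · intro h
    let ψ : F →ₗ[𝕜] G :=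
      (L.ker.liftQ φ h).comp (L.toLinearMap.quotKerEquivOfSurjective hL).symm.toLinearMap
    have hψL : ∀ x, ψ (L x) = φ x := fun x => by
      have key := LinearMap.quotKerEquivOfSurjective_symm_apply (f := (L : E →ₗ[𝕜] F)) hL x
      simp only [coe_coe] at key
      simp [ψ, key]
    have hψ : Continuous ψ := by
      rw [(L.isQuotientMap hL).continuous_iff]
      simpa [Function.comp_def, hψL] using φ.continuous
    exact ⟨⟨ψ, hψ⟩, ext hψL⟩

end ContinuousLinearMap

theorem stmt6_general {B₁ B₂ : Type*} [NormedAddCommGroup B₁] [NormedSpace ℝ B₁] [CompleteSpace B₁]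
    [NormedAddCommGroup B₂] [NormedSpace ℝ B₂] [CompleteSpace B₂]
    (K : B₁ → B₂)
    (hreg : ∀ u : B₁, K u = 0 → Function.Surjective (fderiv ℝ K u) ∧
      Submodule.ClosedComplemented (LinearMap.ker (fderiv ℝ K u : B₁ →ₗ[ℝ] B₂)))
    (f : B₁ → ℝ)
    (u : B₁) (hu : K u = 0) :
    (∀ v ∈ LinearMap.ker (fderiv ℝ K u : B₁ →ₗ[ℝ] B₂), fderiv ℝ f u v = 0) ↔
      ∃ lam : B₂ →L[ℝ] ℝ, ∀ v : B₁, fderiv ℝ f u v = lam (fderiv ℝ K u v) := by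
  calc (∀ v ∈ LinearMap.ker (fderiv ℝ K u : B₁ →ₗ[ℝ] B₂), fderiv ℝ f u v = 0)
      ↔ (fderiv ℝ K u).ker ≤ (fderiv ℝ f u).ker := Iff.rfl
    _ ↔ ∃ lam : B₂ →L[ℝ] ℝ, lam.comp (fderiv ℝ K u) = fderiv ℝ f u :=
      (ContinuousLinearMap.exists_comp_eq_iff_ker_le (hreg u hu).1 _).symm
    _ ↔ ∃ lam : B₂ →L[ℝ] ℝ, ∀ v : B₁, fderiv ℝ f u v = lam (fderiv ℝ K u v) := by
      simp only [ContinuousLinearMap.ext_iff, ContinuousLinearMap.comp_apply, eq_comm]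

/-- Lagrange multiplier theorem on Banach spaces: at a point of the constraint set
`K⁻¹(0)` where `DK` is surjective with closed complemented kernel, `Df` vanishes on
`ker DK` iff there is a multiplier `λ ∈ B₂*` with `Df = λ ∘ DK`. -/
theorem stmt6 {B₁ B₂ : Type*} [NormedAddCommGroup B₁] [NormedSpace ℝ B₁] [CompleteSpace B₁]
    [NormedAddCommGroup B₂] [NormedSpace ℝ B₂] [CompleteSpace B₂]
    (K : B₁ → B₂) (hK : ContDiff ℝ 1 K)
    (hreg : ∀ u : B₁, K u = 0 → Function.Surjective (fderiv ℝ K u) ∧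
      Submodule.ClosedComplemented (LinearMap.ker (fderiv ℝ K u : B₁ →ₗ[ℝ] B₂)))
    (f : B₁ → ℝ) (hf : ContDiff ℝ 1 f)
    (u : B₁) (hu : K u = 0) :
    (∀ v ∈ LinearMap.ker (fderiv ℝ K u : B₁ →ₗ[ℝ] B₂), fderiv ℝ f u v = 0) ↔
      ∃ lam : B₂ →L[ℝ] ℝ, ∀ v : B₁, fderiv ℝ f u v = lam (fderiv ℝ K u v) :=
  stmt6_general K hreg f u hu
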